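/- The group G = ⟨ℓ, u | ℓ^N = 1, u³ = ℓ²⟩ with N even is non-abelian; its abelianization is cyclic of order 3N. In particular, when N = α₁α₂ + α₃ with α₁α₂α₃β₁β₂ odd, this group is not isomorphic to the cyclic group ℤ/3N. -/

import Mathlib

/-- Relations ℓ^N = 1, u³ = ℓ² on two generators (ℓ = generator 0, u = generator 1). -/
def cubicConicRels (N : ℕ) : Set (FreeGroup (Fin 2)) :=
  {FreeGroup.of 0 ^ N, FreeGroup.of 1 ^ 3 * (FreeGroup.of 0 ^ 2)⁻¹}

/-- The group G = ⟨ℓ, u | ℓ^N = 1, u³ = ℓ²⟩. -/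
def cubicConicGroup (N : ℕ) := PresentedGroup (cubicConicRels N)

instance (N : ℕ) : Group (cubicConicGroup N) := by
  unfold cubicConicGroup; infer_instance

/-!
In an abelian quotient the relation u³ = ℓ² makes g = u²ℓ⁻¹ satisfy g³ = ℓ and g² = u, so the
abelianization is cyclic, generated by g, with g^{3N} = ℓ^N = 1; sending ℓ ↦ 3, u ↦ 2 in ℤ/3N maps
g to 1, so g has order exactly 3N. Since N is even, ℓ ↦ a transposition, u ↦ a 3-cycle defines a
map onto S₃, so the group itself is not abelian.
-/

section CommGroup

variable {A : Type*} [CommGroup A] {l u : A}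

theorem sq_mul_inv_pow_three_of_pow_three_eq_sq (h : u ^ 3 = l ^ 2) : (u ^ 2 * l⁻¹) ^ 3 = l := by
  rw [mul_pow, ← pow_mul, show u ^ (2 * 3) = (u ^ 3) ^ 2 by group, h]
  group

theorem sq_mul_inv_sq_of_pow_three_eq_sq (h : u ^ 3 = l ^ 2) : (u ^ 2 * l⁻¹) ^ 2 = u := by
  rw [mul_pow, inv_pow, ← pow_mul, show 2 * 2 = 3 + 1 from rfl, pow_succ, h, mul_comm (l ^ 2) u,
    mul_inv_cancel_right]

end CommGroup

namespace cubicConicGroup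

variable {N : ℕ}

def ell (N : ℕ) : cubicConicGroup N := PresentedGroup.of 0

def u (N : ℕ) : cubicConicGroup N := PresentedGroup.of 1

theorem ell_pow : ell N ^ N = 1 :=
  PresentedGroup.one_of_mem (Set.mem_insert _ _)

theorem u_pow_three : u N ^ 3 = ell N ^ 2 :=
  mul_inv_eq_one.mp (PresentedGroup.one_of_mem (Set.mem_insert_of_mem _ rfl))

theorem apply_mem_of_ell_mem_of_u_mem {H : Type*} [Group H] (f : cubicConicGroup N →* H)
    {S : Subgroup H} (hell : f (ell N) ∈ S) (hu : f (u N) ∈ S) (x : cubicConicGroup N) :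
    f x ∈ S :=
  PresentedGroup.generated_by _ (S.comap f) (fun i => by fin_cases i <;> assumption) x

section lift

variable {H : Type*} [Group H] {a b : H}

def lift (ha : a ^ N = 1) (hb : b ^ 3 = a ^ 2) : cubicConicGroup N →* H :=
  PresentedGroup.toGroup (f := ![a, b]) (by rintro r (rfl | rfl) <;> simp [ha, hb])

@[simp]
theorem lift_ell (ha : a ^ N = 1) (hb : b ^ 3 = a ^ 2) : lift ha hb (ell N) = a :=
  PresentedGroup.toGroup.of _

@[simp]
theorem lift_u (ha : a ^ N = 1) (hb : b ^ 3 = a ^ 2) : lift ha hb (u N) = b :=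
  PresentedGroup.toGroup.of _

end lift

theorem not_commute_ell_u (hN : Even N) : ¬ Commute (ell N) (u N) := by
  have hswap : (Equiv.swap (0 : Fin 3) 1) ^ N = 1 := by
    obtain ⟨k, rfl⟩ := hN
    rw [← two_mul, pow_mul, sq, Equiv.swap_mul_self, one_pow]
  intro h
  have := h.map (lift (b := finRotate 3) hswap (by decide))
  rw [lift_ell, lift_u] at this
  exact absurd this.eq (by decide)

def abelianizationGen (N : ℕ) : Abelianization (cubicConicGroup N) :=
  Abelianization.of (u N) ^ 2 * (Abelianization.of (ell N))⁻¹

theorem abelianizationGen_pow_three : abelianizationGen N ^ 3 = Abelianization.of (ell N) :=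
  sq_mul_inv_pow_three_of_pow_three_eq_sq (by simp only [← map_pow, u_pow_three])

theorem abelianizationGen_sq : abelianizationGen N ^ 2 = Abelianization.of (u N) :=
  sq_mul_inv_sq_of_pow_three_eq_sq (by simp only [← map_pow, u_pow_three])

theorem mem_zpowers_abelianizationGen (x : Abelianization (cubicConicGroup N)) :
    x ∈ Subgroup.zpowers (abelianizationGen N) := by
  obtain ⟨y, rfl⟩ := QuotientGroup.mk_surjective x
  exact apply_mem_of_ell_mem_of_u_mem Abelianization.of
    (abelianizationGen_pow_three ▸ Subgroup.pow_mem _ (Subgroup.mem_zpowers _) 3)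
    (abelianizationGen_sq ▸ Subgroup.pow_mem _ (Subgroup.mem_zpowers _) 2) y

def toZMod (N : ℕ) : Abelianization (cubicConicGroup N) →* Multiplicative (ZMod (3 * N)) :=
  Abelianization.lift <| lift (a := .ofAdd 3) (b := .ofAdd 2)
    (by rw [← ofAdd_nsmul, nsmul_eq_mul,
      show (N : ZMod (3 * N)) * 3 = ((3 * N : ℕ) : ZMod (3 * N)) by push_cast; ring,
      ZMod.natCast_self, ofAdd_zero])
    (by rw [← ofAdd_nsmul, ← ofAdd_nsmul]; norm_num)

theorem toZMod_abelianizationGen : toZMod N (abelianizationGen N) = .ofAdd 1 := by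
  simp only [toZMod, abelianizationGen, map_mul, map_pow, map_inv, Abelianization.lift_apply_of,
    lift_ell, lift_u, ← ofAdd_nsmul, ← ofAdd_neg, ← ofAdd_add]
  norm_num

theorem orderOf_abelianizationGen : orderOf (abelianizationGen N) = 3 * N := by
  refine Nat.dvd_antisymm (orderOf_dvd_of_pow_eq_one ?_) ?_
  · rw [pow_mul, abelianizationGen_pow_three, ← map_pow, ell_pow, map_one]
  · simpa [toZMod_abelianizationGen, orderOf_ofAdd_eq_addOrderOf, ZMod.addOrderOf_one] using
      orderOf_map_dvd (toZMod N) (abelianizationGen N)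

end cubicConicGroup

theorem cubicConicGroup_not_abelian_general (N : ℕ) (hN : Even N) :
    (¬ ∀ a b : cubicConicGroup N, a * b = b * a) ∧
    IsCyclic (Abelianization (cubicConicGroup N)) ∧
    Nat.card (Abelianization (cubicConicGroup N)) = 3 * N ∧
    IsEmpty (cubicConicGroup N ≃* Multiplicative (ZMod (3 * N))) := by
  have hnonab : ¬ ∀ a b : cubicConicGroup N, a * b = b * a :=
    fun h => cubicConicGroup.not_commute_ell_u hN (h _ _)
  have hgen := cubicConicGroup.mem_zpowers_abelianizationGen (N := N)
  refine ⟨hnonab, ⟨_, hgen⟩, ?_, ⟨fun e => hnonab fun a b => ?_⟩⟩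
  · rw [← orderOf_eq_card_of_forall_mem_zpowers hgen, cubicConicGroup.orderOf_abelianizationGen]
  · exact e.injective (by rw [map_mul, map_mul]; exact mul_comm _ _)

/-- The group G = ⟨ℓ, u | ℓ^N = 1, u³ = ℓ²⟩ with N even is non-abelian; its abelianization
is cyclic of order 3N; in particular G is not isomorphic to the cyclic group ℤ/3N. -/
theorem cubicConicGroup_not_abelian (N : ℕ) (hN : Even N) (hpos : 0 < N) :
    (¬ ∀ a b : cubicConicGroup N, a * b = b * a) ∧
    IsCyclic (Abelianization (cubicConicGroup N)) ∧
    Nat.card (Abelianization (cubicConicGroup N)) = 3 * N ∧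
    IsEmpty (cubicConicGroup N ≃* Multiplicative (ZMod (3 * N))) :=
  cubicConicGroup_not_abelian_general N hN
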